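/- Let $p$ be an odd prime and let $1 \le k \le (p-1)/2$. Then $(-1)^{(p+1)/2+k} \cdot \frac{2\,(\frac{1}{2})_{(p+1)/2}^2\,(\frac{1}{2})_{(p-1)/2+k}}{(1)_{(p-1)/2}^2\,(1)_{(p+1)/2-k}\,(\frac{1}{2})_k^2} \equiv \frac{p^3\, 4^k}{2k(2k-1)\binom{2k}{k}} \pmod{p^4}$, the congruence being between $p$-integral rationals. -/

import Mathlib

open Finset

/-- Pochhammer symbol `(a)_k = a(a+1)⋯(a+k-1)` for a rational `a`. -/
def poch (a : ℚ) (k : ℕ) : ℚ := ∏ i ∈ Finset.range k, (a + i)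

/-- Euler numbers, defined by `∑ E_n x^n/n! = 2e^x/(e^{2x}+1) = sech x`. -/
def eulerNumber : ℕ → ℤ
  | 0 => 1
  | n + 1 =>
    -∑ k ∈ (Finset.range (n + 1)).attach,
      if Even (n + 1 - k.1) then ((n + 1).choose k.1 : ℤ) * eulerNumber k.1 else 0
  decreasing_by exact Finset.mem_range.mp k.2

/-- `x ≡ y (mod p^m)` for rationals: `v_p(x - y) ≥ m` (with `x = y` allowed). -/
def ratCongr (p m : ℕ) (x y : ℚ) : Prop :=
  x = y ∨ (m : ℤ) ≤ padicValRat p (x - y)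

/-!
Write `p = 2n + 1`. Each of `(1/2)_{n+1}` and `(1/2)_{n+k}` has exactly one factor divisible
by `p`, namely `1/2 + n = p/2`, so the left side is `p³` times a `p`-integral cofactor, while the
right side is exactly `p³ (k-1)! / (2 (2k-1) (1/2)_k)`. It remains to compare the cofactors
modulo `p`. There `1/2 ≡ -n`, so `(1/2)_k ≡ (-n)_k = (-1)^k n!/(n-k)!` and
`(p/2 + 1)_{k-1} ≡ (k-1)!`, and the left cofactor also reduces to `(k-1)! / (2 (2k-1) (1/2)_k)`.
-/

/-- The condition on `x.den` is needed because `(x : ZMod p)` is `x.num / x.den`, which is junk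
when `p ∣ x.den`. -/
def HasResidue (p : ℕ) [Fact p.Prime] (x : ℚ) (r : ZMod p) : Prop :=
  (x.den : ZMod p) ≠ 0 ∧ (x : ZMod p) = r

namespace HasResidue

variable {p : ℕ} [Fact p.Prime] {x y : ℚ} {r s : ZMod p}

lemma natCast (n : ℕ) : HasResidue p n n := ⟨by simp, by simp⟩

lemma ofNat (n : ℕ) [n.AtLeastTwo] : HasResidue p (OfNat.ofNat n) (OfNat.ofNat n) := by
  simpa only [Nat.cast_ofNat] using natCast (p := p) (OfNat.ofNat n)

lemma one : HasResidue p 1 1 := by simpa using natCast (p := p) 1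

lemma neg (hx : HasResidue p x r) : HasResidue p (-x) (-r) :=
  ⟨by simpa using hx.1, by rw [Rat.cast_neg, hx.2]⟩

lemma add (hx : HasResidue p x r) (hy : HasResidue p y s) : HasResidue p (x + y) (r + s) :=
  ⟨ne_zero_of_dvd_ne_zero (by rw [Nat.cast_mul]; exact mul_ne_zero hx.1 hy.1)
      (Nat.cast_dvd_cast (Rat.add_den_dvd x y)),
    by rw [Rat.cast_add_of_ne_zero hx.1 hy.1, hx.2, hy.2]⟩

lemma sub (hx : HasResidue p x r) (hy : HasResidue p y s) : HasResidue p (x - y) (r - s) := by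
  simpa only [sub_eq_add_neg] using hx.add hy.neg

lemma mul (hx : HasResidue p x r) (hy : HasResidue p y s) : HasResidue p (x * y) (r * s) :=
  ⟨ne_zero_of_dvd_ne_zero (by rw [Nat.cast_mul]; exact mul_ne_zero hx.1 hy.1)
      (Nat.cast_dvd_cast (Rat.mul_den_dvd x y)),
    by rw [Rat.cast_mul_of_ne_zero hx.1 hy.1, hx.2, hy.2]⟩

lemma pow (hx : HasResidue p x r) (k : ℕ) : HasResidue p (x ^ k) (r ^ k) := by
  induction k with
  | zero => simpa using one
  | succ k ih => simpa only [pow_succ] using ih.mul hx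

lemma intCast_num_eq_zero_iff (hx : HasResidue p x r) : (x.num : ZMod p) = 0 ↔ r = 0 := by
  rw [← hx.2, Rat.cast_def, div_eq_zero_iff, or_iff_left hx.1]

lemma inv (hx : HasResidue p x r) (hr : r ≠ 0) : HasResidue p x⁻¹ r⁻¹ := by
  have hnum := hx.intCast_num_eq_zero_iff.not.mpr hr
  have hx0 : x ≠ 0 := by rintro rfl; exact hr (by rw [← hx.2, Rat.cast_zero])
  refine ⟨?_, by rw [Rat.cast_inv_of_ne_zero hnum, hx.2]⟩
  rwa [Rat.den_inv_of_ne_zero hx0, Ne, ZMod.natCast_eq_zero_iff, ← Int.natCast_dvd,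
    ← ZMod.intCast_zmod_eq_zero_iff_dvd]

lemma div (hx : HasResidue p x r) (hy : HasResidue p y s) (hs : s ≠ 0) :
    HasResidue p (x / y) (r / s) := by
  simpa only [div_eq_mul_inv] using hx.mul (hy.inv hs)

lemma poch {a : ℚ} (ha : HasResidue p a r) (k : ℕ) :
    HasResidue p (poch a k) ((ascPochhammer (ZMod p) k).eval r) := by
  induction k with
  | zero => simpa [_root_.poch] using one
  | succ k ih =>
    rw [_root_.poch, prod_range_succ, ← _root_.poch, ascPochhammer_succ_eval]
    exact ih.mul (ha.add (natCast k))

lemma one_le_padicValRat (hx : HasResidue p x 0) (hx0 : x ≠ 0) : 1 ≤ padicValRat p x := by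
  have hden : ¬ p ∣ x.den := by rw [← ZMod.natCast_eq_zero_iff]; exact hx.1
  have hnum : (p : ℤ) ^ 1 ∣ x.num := by
    rw [pow_one, ← ZMod.intCast_zmod_eq_zero_iff_dvd, hx.intCast_num_eq_zero_iff]
  rw [padicValRat_def, padicValNat.eq_zero_of_not_dvd hden, Nat.cast_zero, sub_zero]
  exact_mod_cast ((padicValInt_dvd_iff 1 x.num).mp hnum).resolve_left (Rat.num_ne_zero.mpr hx0)

theorem ratCongr_pow_mul (m : ℕ) (hx : HasResidue p x r) (hy : HasResidue p y r) :
    ratCongr p (m + 1) (p ^ m * x) (p ^ m * y) := by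
  have hxy := hx.sub hy
  rw [sub_self] at hxy
  rcases eq_or_ne (x - y) 0 with h | h
  · left
    rw [sub_eq_zero.mp h]
  · right
    have hp : p.Prime := Fact.out
    have hp0 : (p : ℚ) ≠ 0 := Nat.cast_ne_zero.mpr hp.ne_zero
    rw [← mul_sub, padicValRat.mul (pow_ne_zero _ hp0) h, padicValRat.pow,
      padicValRat.self hp.one_lt]
    have := hxy.one_le_padicValRat h
    push_cast
    linarith

end HasResidue

lemma poch_succ (a : ℚ) (k : ℕ) : poch a (k + 1) = poch a k * (a + k) :=
  prod_range_succ _ _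

lemma poch_add (a : ℚ) (m l : ℕ) : poch a (m + l) = poch a m * poch (a + m) l := by
  simp only [poch, prod_range_add, Nat.cast_add, add_assoc]

lemma poch_half_eq (k : ℕ) : poch (1 / 2) k = (2 * k).factorial / (4 ^ k * k.factorial) := by
  induction k with
  | zero => simp [poch]
  | succ k ih =>
    rw [poch_succ, ih, show 2 * (k + 1) = 2 * k + 1 + 1 by ring]
    push_cast [Nat.factorial_succ]
    field_simp
    ring

lemma four_pow_div_eq_factorial_div_poch (j : ℕ) :
    (4 : ℚ) ^ (j + 1) /
        (2 * ((j + 1 : ℕ) : ℚ) * (2 * ((j + 1 : ℕ) : ℚ) - 1) *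
          ((2 * (j + 1)).choose (j + 1) : ℚ)) =
      j.factorial / (2 * ((2 * j + 1 : ℕ) : ℚ) * poch (1 / 2) (j + 1)) := by
  rw [poch_half_eq, Nat.cast_choose ℚ (by omega : j + 1 ≤ 2 * (j + 1)),
    show 2 * (j + 1) - (j + 1) = j + 1 by omega]
  have : (2 * j + 1 : ℚ) ≠ 0 := by positivity
  push_cast [Nat.factorial_succ]
  rw [show 2 * ((j : ℚ) + 1) - 1 = 2 * j + 1 by ring]
  field_simp

lemma lhs_eq_cube_mul (n j : ℕ) :
    (-1 : ℚ) ^ (n + 1 + (j + 1)) * (2 * poch (1 / 2) (n + 1) ^ 2 * poch (1 / 2) (n + (j + 1))) /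
        ((n.factorial : ℚ) ^ 2 * ((n + 1 - (j + 1)).factorial : ℚ) * poch (1 / 2) (j + 1) ^ 2) =
      ((2 * n + 1 : ℕ) : ℚ) ^ 3 *
        ((-1) ^ (n + j) * poch (1 / 2) n ^ 3 * poch (1 / 2 + (n + 1 : ℕ)) j /
          (4 * (n.factorial : ℚ) ^ 2 * ((n - j).factorial : ℚ) *
            poch (1 / 2) (j + 1) ^ 2)) := by
  have hpoch : poch (1 / 2) (j + 1) ≠ 0 := by rw [poch_half_eq]; positivity
  rw [show n + (j + 1) = (n + 1) + j by ring, poch_add _ (n + 1) j, poch_succ _ n,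
    Nat.add_sub_add_right]
  push_cast
  field_simp
  ring

section ZModOddPrime

variable {p n : ℕ} [Fact p.Prime]

lemma natCast_factorial_ne_zero {m : ℕ} (hm : m < p) : (m.factorial : ZMod p) ≠ 0 := by
  rw [Ne, ZMod.natCast_eq_zero_iff, (Fact.out : p.Prime).dvd_factorial]
  omega

lemma natCast_ne_zero_of_lt {m : ℕ} (hm0 : 0 < m) (hm : m < p) : (m : ZMod p) ≠ 0 := by
  rw [Ne, ZMod.natCast_eq_zero_iff]
  exact fun h => absurd (Nat.le_of_dvd hm0 h) (by omega)

lemma two_mul_add_one_eq_zero (hpn : p = 2 * n + 1) : (2 * n + 1 : ZMod p) = 0 := by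
  have h : ((2 * n + 1 : ℕ) : ZMod p) = 0 := by rw [← hpn, ZMod.natCast_self]
  exact_mod_cast h

lemma two_ne_zero_of_eq_two_mul_add_one (hpn : p = 2 * n + 1) : (2 : ZMod p) ≠ 0 := by
  intro h2
  simpa [h2] using two_mul_add_one_eq_zero hpn

lemma one_div_two_eq_neg (hpn : p = 2 * n + 1) : (1 / 2 : ZMod p) = -n := by
  have h2 := two_ne_zero_of_eq_two_mul_add_one hpn
  field_simp
  linear_combination two_mul_add_one_eq_zero hpn

lemma ascPochhammer_eval_one_div_two (hpn : p = 2 * n + 1) (k : ℕ) :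
    (ascPochhammer (ZMod p) k).eval (1 / 2) = (-1) ^ k * n.descFactorial k := by
  rw [one_div_two_eq_neg hpn, ascPochhammer_eval_neg_eq_descPochhammer,
    descPochhammer_eval_eq_descFactorial]

lemma ascPochhammer_eval_one_div_two_mul_factorial (hpn : p = 2 * n + 1) {k : ℕ} (hk : k ≤ n) :
    (ascPochhammer (ZMod p) k).eval (1 / 2) * ((n - k).factorial : ZMod p) =
      (-1) ^ k * n.factorial := by
  rw [ascPochhammer_eval_one_div_two hpn, mul_assoc, ← Nat.cast_mul, mul_comm (n.descFactorial _),
    Nat.factorial_mul_descFactorial hk]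

lemma ascPochhammer_eval_one_div_two_ne_zero (hpn : p = 2 * n + 1) {k : ℕ} (hk : k ≤ n) :
    (ascPochhammer (ZMod p) k).eval (1 / 2) ≠ 0 := by
  intro h
  have := ascPochhammer_eval_one_div_two_mul_factorial hpn hk
  rw [h, zero_mul, eq_comm] at this
  exact mul_ne_zero (pow_ne_zero _ (neg_ne_zero.mpr one_ne_zero))
    (natCast_factorial_ne_zero (by omega)) this

lemma hasResidue_one_div_two (hpn : p = 2 * n + 1) : HasResidue p (1 / 2) (1 / 2) :=
  HasResidue.one.div (HasResidue.ofNat 2) (two_ne_zero_of_eq_two_mul_add_one hpn)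

lemma hasResidue_rhs_cofactor (hpn : p = 2 * n + 1) {j : ℕ} (hj : j < n) :
    HasResidue p (j.factorial / (2 * ((2 * j + 1 : ℕ) : ℚ) * poch (1 / 2) (j + 1)))
      (j.factorial /
        (2 * ((2 * j + 1 : ℕ) : ZMod p) * (ascPochhammer (ZMod p) (j + 1)).eval (1 / 2))) := by
  have hA := ascPochhammer_eval_one_div_two_ne_zero hpn (by omega : j + 1 ≤ n)
  have h2j : ((2 * j + 1 : ℕ) : ZMod p) ≠ 0 := natCast_ne_zero_of_lt (by omega) (by omega)
  exact (HasResidue.natCast _).div (((HasResidue.ofNat 2).mul (HasResidue.natCast _)).mul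
    ((hasResidue_one_div_two hpn).poch _))
    (mul_ne_zero (mul_ne_zero (two_ne_zero_of_eq_two_mul_add_one hpn) h2j) hA)

lemma lhs_cofactor_denominator_ne_zero (hpn : p = 2 * n + 1) {j : ℕ} (hj : j < n) :
    4 * (n.factorial : ZMod p) ^ 2 * ((n - j).factorial : ZMod p) *
      (ascPochhammer (ZMod p) (j + 1)).eval (1 / 2) ^ 2 ≠ 0 := by
  have h2 := two_ne_zero_of_eq_two_mul_add_one hpn
  have h4 : (4 : ZMod p) ≠ 0 := by
    rw [show (4 : ZMod p) = 2 * 2 by norm_num]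
    exact mul_ne_zero h2 h2
  have hN := natCast_factorial_ne_zero (p := p) (m := n) (by omega)
  have hf := natCast_factorial_ne_zero (p := p) (m := n - j) (by omega)
  have hA := ascPochhammer_eval_one_div_two_ne_zero hpn (by omega : j + 1 ≤ n)
  exact mul_ne_zero (mul_ne_zero (mul_ne_zero h4 (pow_ne_zero 2 hN)) hf) (pow_ne_zero 2 hA)

lemma lhs_cofactor_residue_eq (hpn : p = 2 * n + 1) {j : ℕ} (hj : j < n) :
    (-1) ^ (n + j) * (ascPochhammer (ZMod p) n).eval (1 / 2) ^ 3 *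
          (ascPochhammer (ZMod p) j).eval (1 / 2 + ((n + 1 : ℕ) : ZMod p)) /
        (4 * (n.factorial : ZMod p) ^ 2 * ((n - j).factorial : ZMod p) *
          (ascPochhammer (ZMod p) (j + 1)).eval (1 / 2) ^ 2) =
      j.factorial /
        (2 * ((2 * j + 1 : ℕ) : ZMod p) * (ascPochhammer (ZMod p) (j + 1)).eval (1 / 2)) := by
  have h2 := two_ne_zero_of_eq_two_mul_add_one hpn
  have hA := ascPochhammer_eval_one_div_two_ne_zero hpn (by omega : j + 1 ≤ n)
  have h2j : ((2 * j + 1 : ℕ) : ZMod p) ≠ 0 := natCast_ne_zero_of_lt (by omega) (by omega)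
  have hAf := ascPochhammer_eval_one_div_two_mul_factorial hpn (by omega : j + 1 ≤ n)
  have hfac : ((n - j).factorial : ZMod p) = (n - j) * (n - (j + 1)).factorial := by
    rw [show n - j = n - (j + 1) + 1 by omega, Nat.factorial_succ, Nat.cast_mul,
      show n - (j + 1) + 1 = n - j by omega, Nat.cast_sub hj.le]
  have hsq : ((-1 : ZMod p) ^ n) ^ 2 = 1 := by
    rw [← pow_mul, mul_comm, pow_mul, neg_one_sq, one_pow]
  rw [ascPochhammer_eval_one_div_two hpn n, Nat.descFactorial_self,
    show (1 / 2 : ZMod p) + ((n + 1 : ℕ) : ZMod p) = 1 by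
      push_cast; rw [one_div_two_eq_neg hpn]; ring,
    ascPochhammer_eval_one, div_eq_div_iff
      (lhs_cofactor_denominator_ne_zero hpn hj) (mul_ne_zero (mul_ne_zero h2 h2j) hA),
    hfac]
  push_cast
  set A := (ascPochhammer (ZMod p) (j + 1)).eval (1 / 2 : ZMod p)
  set N := (n.factorial : ZMod p)
  set J := (j.factorial : ZMod p)
  set u := (-1 : ZMod p) ^ n
  set s := (-1 : ZMod p) ^ j
  -- after the substitutions the two sides differ by `4 (n - j) + 2 (2j + 1) = 2 (2n + 1) = 0`
  linear_combination 2 * s * N ^ 3 * J * A * two_mul_add_one_eq_zero hpn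
    - 4 * J * N ^ 2 * (n - j) * A * hAf + (u ^ 2 + 1) * s * N ^ 3 * J * 2 * (2 * j + 1) * A * hsq

lemma hasResidue_lhs_cofactor (hpn : p = 2 * n + 1) {j : ℕ} (hj : j < n) :
    HasResidue p
      ((-1) ^ (n + j) * poch (1 / 2) n ^ 3 * poch (1 / 2 + (n + 1 : ℕ)) j /
          (4 * (n.factorial : ℚ) ^ 2 * ((n - j).factorial : ℚ) * poch (1 / 2) (j + 1) ^ 2))
      (j.factorial /
        (2 * ((2 * j + 1 : ℕ) : ZMod p) * (ascPochhammer (ZMod p) (j + 1)).eval (1 / 2))) := by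
  have hhalf := hasResidue_one_div_two hpn
  rw [← lhs_cofactor_residue_eq hpn hj]
  exact (((HasResidue.one.neg.pow (n + j)).mul ((hhalf.poch n).pow 3)).mul
    ((hhalf.add (HasResidue.natCast (n + 1))).poch j)).div
    ((((HasResidue.ofNat 4).mul ((HasResidue.natCast n.factorial).pow 2)).mul
      (HasResidue.natCast (n - j).factorial)).mul ((hhalf.poch (j + 1)).pow 2))
    (lhs_cofactor_denominator_ne_zero hpn hj)

end ZModOddPrime

theorem stmt6 (p : ℕ) (hp : p.Prime) (hodd : Odd p) (k : ℕ)
    (hk1 : 1 ≤ k) (hk2 : k ≤ (p - 1) / 2) :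
    ratCongr p 4
      ((-1 : ℚ) ^ ((p + 1) / 2 + k) *
        (2 * poch (1/2) ((p + 1) / 2) ^ 2 * poch (1/2) ((p - 1) / 2 + k)) /
        ((((p - 1) / 2).factorial : ℚ) ^ 2 * (((p + 1) / 2 - k).factorial : ℚ) *
          poch (1/2) k ^ 2))
      ((p : ℚ) ^ 3 * 4 ^ k / (2 * k * (2 * k - 1) * ((2 * k).choose k : ℚ))) := by
  have : Fact p.Prime := ⟨hp⟩
  obtain ⟨n, rfl⟩ := hodd
  obtain ⟨j, rfl⟩ : ∃ j, k = j + 1 := ⟨k - 1, by omega⟩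
  have hj : j < n := by omega
  rw [show (2 * n + 1 + 1) / 2 = n + 1 by omega, show (2 * n + 1 - 1) / 2 = n by omega,
    lhs_eq_cube_mul, mul_div_assoc (_ ^ 3) ((4 : ℚ) ^ (j + 1)),
    four_pow_div_eq_factorial_div_poch]
  exact HasResidue.ratCongr_pow_mul 3 (hasResidue_lhs_cofactor rfl hj)
    (hasResidue_rhs_cofactor rfl hj)
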